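/- arXiv:0710.3008 — 6 statements merged into one kernel-verified Lean document; each statement's English description precedes it below -/
import Mathlib

section
/- Let g ≥ 2 and d be integers, set G_d := gcd(d − g + 1, 2g − 2) and N := (2g − 2)/G_d. A triple of integers (g₁, g₂, k) is a d-special stable vine curve of genus g if and only if there exists an integer m with 1 ≤ m < G_d such that k ≡ N·m (mod 2), 1 ≤ k ≤ min(N·m + 2, 2g − N·m), 2g₁ = N·m − k + 2, and 2g₂ = 2g − N·m − k. -/
/-!
Since `e₂ = d - e₁` and `w₂ = (2g - 2) - w₁`, the two Basic Inequalities of a multidegree on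
the vine curve coincide, and both say `d w₁ - k (g - 1) ≤ (2g - 2) e₁ ≤ d w₁ + k (g - 1)`.
So a balanced multidegree that is not stably balanced exists iff `2g - 2` divides
`d w₁ + k (g - 1) = (d - g + 1) w₁ + (2g - 2)(g₁ - 1 + k)`, i.e. iff `N ∣ w₁`.
Writing `w₁ = N m`, stability of the vine (`w₁, w₂ ≥ 1`) becomes `1 ≤ m < G`.
-/

/-- `(g₁, g₂, k)` encodes a stable vine curve of genus `g`: two smooth irreducible
components of genera `g₁, g₂` meeting in `k` nodes. -/
def StableVine (g g₁ g₂ k : ℤ) : Prop :=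
  0 ≤ g₁ ∧ 0 ≤ g₂ ∧ 1 ≤ k ∧ g = g₁ + g₂ + k - 1 ∧ ((g₁ = 0 ∨ g₂ = 0) → 3 ≤ k)

/-- The Basic Inequality for a component of `ω`-degree `w`, with `k` nodes, on a curve of
genus `g`, for total degree `d` and partial degree `e`. -/
def BasicIneq (g d k w e : ℤ) : Prop :=
  (d : ℚ) * w / (2 * g - 2) - k / 2 ≤ e ∧ (e : ℚ) ≤ (d : ℚ) * w / (2 * g - 2) + k / 2

/-- The strict version of the Basic Inequality. -/
def BasicIneqStrict (g d k w e : ℤ) : Prop :=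
  (d : ℚ) * w / (2 * g - 2) - k / 2 < e ∧ (e : ℚ) < (d : ℚ) * w / (2 * g - 2) + k / 2

/-- `(e₁, e₂)` is a balanced multidegree of total degree `d` on the vine curve `(g₁, g₂, k)`. -/
def IsBalanced (g d g₁ g₂ k e₁ e₂ : ℤ) : Prop :=
  e₁ + e₂ = d ∧ BasicIneq g d k (2 * g₁ - 2 + k) e₁ ∧ BasicIneq g d k (2 * g₂ - 2 + k) e₂

/-- `(e₁, e₂)` is a stably balanced multidegree of total degree `d` on `(g₁, g₂, k)`. -/
def IsStablyBalanced (g d g₁ g₂ k e₁ e₂ : ℤ) : Prop :=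
  e₁ + e₂ = d ∧ BasicIneqStrict g d k (2 * g₁ - 2 + k) e₁ ∧
    BasicIneqStrict g d k (2 * g₂ - 2 + k) e₂

/-- The vine curve `(g₁, g₂, k)` is `d`-special: it admits a balanced multidegree of total
degree `d` which is not stably balanced. -/
def DSpecial (g d g₁ g₂ k : ℤ) : Prop :=
  ∃ e₁ e₂ : ℤ, IsBalanced g d g₁ g₂ k e₁ e₂ ∧ ¬ IsStablyBalanced g d g₁ g₂ k e₁ e₂

theorem Int.dvd_mul_iff_div_gcd_dvd {a b w : ℤ} (hb : b ≠ 0) :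
    b ∣ a * w ↔ b / Int.gcd a b ∣ w := by
  have hpos : 0 < Int.gcd a b := Int.gcd_pos_of_ne_zero_right a hb
  have hcop := Int.gcd_div_gcd_div_gcd hpos
  set G : ℤ := (Int.gcd a b : ℤ)
  have hG : G ≠ 0 := by positivity
  have ha : a = G * (a / G) := (Int.mul_ediv_cancel' (Int.gcd_dvd_left a b)).symm
  have hb' : b = G * (b / G) := (Int.mul_ediv_cancel' (Int.gcd_dvd_right a b)).symm
  calc b ∣ a * w ↔ G * (b / G) ∣ G * (a / G * w) := by rw [← mul_assoc, ← ha, ← hb']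
    _ ↔ b / G ∣ a / G * w := mul_dvd_mul_iff_left hG
    _ ↔ b / G ∣ w :=
      ⟨fun h => Int.dvd_of_dvd_mul_right_of_gcd_one h (by rwa [Int.gcd_comm]),
        fun h => h.mul_left _⟩

section BasicInequality

variable {g d k w e : ℤ}

theorem two_mul_sub_two_pos (hg : 1 < g) : (0 : ℚ) < 2 * g - 2 := by
  have : (1 : ℚ) < g := by exact_mod_cast hg
  linarith

theorem basicIneq_endpoints_eq (hg : 1 < g) :
    (d : ℚ) * w / (2 * g - 2) - k / 2 = ((d * w - k * (g - 1) : ℤ) : ℚ) / (2 * g - 2) ∧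
      (d : ℚ) * w / (2 * g - 2) + k / 2 = ((d * w + k * (g - 1) : ℤ) : ℚ) / (2 * g - 2) := by
  have hne : (g : ℚ) - 1 ≠ 0 := by linarith [two_mul_sub_two_pos hg]
  constructor <;> field_simp <;> push_cast <;> ring

theorem basicIneq_iff (hg : 1 < g) :
    BasicIneq g d k w e ↔
      d * w - k * (g - 1) ≤ (2 * g - 2) * e ∧ (2 * g - 2) * e ≤ d * w + k * (g - 1) := by
  obtain ⟨lo, hi⟩ := basicIneq_endpoints_eq (d := d) (w := w) (k := k) hg
  rw [BasicIneq, lo, hi, div_le_iff₀ (two_mul_sub_two_pos hg),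
    le_div_iff₀ (two_mul_sub_two_pos hg), mul_comm (e : ℚ)]
  norm_cast

theorem basicIneqStrict_iff (hg : 1 < g) :
    BasicIneqStrict g d k w e ↔
      d * w - k * (g - 1) < (2 * g - 2) * e ∧ (2 * g - 2) * e < d * w + k * (g - 1) := by
  obtain ⟨lo, hi⟩ := basicIneq_endpoints_eq (d := d) (w := w) (k := k) hg
  rw [BasicIneqStrict, lo, hi, div_lt_iff₀ (two_mul_sub_two_pos hg),
    lt_div_iff₀ (two_mul_sub_two_pos hg), mul_comm (e : ℚ)]
  norm_cast

theorem basicIneq_sub_iff (hg : 1 < g) :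
    BasicIneq g d k (2 * g - 2 - w) (d - e) ↔ BasicIneq g d k w e := by
  rw [basicIneq_iff hg, basicIneq_iff hg]
  constructor <;> rintro ⟨h₁, h₂⟩ <;> constructor <;> linarith

theorem basicIneqStrict_sub_iff (hg : 1 < g) :
    BasicIneqStrict g d k (2 * g - 2 - w) (d - e) ↔ BasicIneqStrict g d k w e := by
  rw [basicIneqStrict_iff hg, basicIneqStrict_iff hg]
  constructor <;> rintro ⟨h₁, h₂⟩ <;> constructor <;> linarith

theorem basicIneq_and_not_strict_iff (hg : 1 < g) (hk : 0 ≤ k) :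
    BasicIneq g d k w e ∧ ¬ BasicIneqStrict g d k w e ↔
      (2 * g - 2) * e = d * w - k * (g - 1) ∨ (2 * g - 2) * e = d * w + k * (g - 1) := by
  have hK : 0 ≤ k * (g - 1) := mul_nonneg hk (by omega)
  rw [basicIneq_iff hg, basicIneqStrict_iff hg]
  generalize (2 * g - 2) * e = c, d * w = a, k * (g - 1) = K at hK ⊢
  omega

end BasicInequality

section VineCurve

variable {g d g₁ g₂ k e₁ e₂ : ℤ}

theorem isBalanced_iff (hg : 1 < g) (hgen : g = g₁ + g₂ + k - 1) :
    IsBalanced g d g₁ g₂ k e₁ e₂ ↔ e₂ = d - e₁ ∧ BasicIneq g d k (2 * g₁ - 2 + k) e₁ := by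
  rw [IsBalanced, show 2 * g₂ - 2 + k = 2 * g - 2 - (2 * g₁ - 2 + k) by omega]
  constructor
  · rintro ⟨hsum, h₁, -⟩
    exact ⟨by omega, h₁⟩
  · rintro ⟨rfl, h₁⟩
    exact ⟨by ring, h₁, (basicIneq_sub_iff hg).2 h₁⟩

theorem isStablyBalanced_iff (hg : 1 < g) (hgen : g = g₁ + g₂ + k - 1) :
    IsStablyBalanced g d g₁ g₂ k e₁ e₂ ↔
      e₂ = d - e₁ ∧ BasicIneqStrict g d k (2 * g₁ - 2 + k) e₁ := by
  rw [IsStablyBalanced, show 2 * g₂ - 2 + k = 2 * g - 2 - (2 * g₁ - 2 + k) by omega]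
  constructor
  · rintro ⟨hsum, h₁, -⟩
    exact ⟨by omega, h₁⟩
  · rintro ⟨rfl, h₁⟩
    exact ⟨by ring, h₁, (basicIneqStrict_sub_iff hg).2 h₁⟩

theorem dSpecial_iff_dvd (hg : 1 < g) (hgen : g = g₁ + g₂ + k - 1) (hk : 0 ≤ k) :
    DSpecial g d g₁ g₂ k ↔ 2 * g - 2 ∣ d * (2 * g₁ - 2 + k) + k * (g - 1) := by
  simp only [DSpecial, isBalanced_iff hg hgen, isStablyBalanced_iff hg hgen]
  constructor
  · rintro ⟨e, _, ⟨rfl, hB⟩, hS⟩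
    rcases (basicIneq_and_not_strict_iff hg hk).1 ⟨hB, fun h => hS ⟨rfl, h⟩⟩ with he | he
    · exact ⟨e + k, by linarith⟩
    · exact ⟨e, by linarith⟩
  · rintro ⟨e, he⟩
    refine ⟨e, d - e, ⟨rfl, ?_⟩, fun ⟨_, hS⟩ => ?_⟩
    · exact ((basicIneq_and_not_strict_iff hg hk).2 (.inr he.symm)).1
    · exact ((basicIneq_and_not_strict_iff hg hk).2 (.inr he.symm)).2 hS

theorem dSpecial_iff_div_gcd_dvd (hg : 1 < g) (hgen : g = g₁ + g₂ + k - 1) (hk : 0 ≤ k) :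
    DSpecial g d g₁ g₂ k ↔
      (2 * g - 2) / Int.gcd (d - g + 1) (2 * g - 2) ∣ 2 * g₁ - 2 + k := by
  have hsplit : d * (2 * g₁ - 2 + k) + k * (g - 1) =
      (d - g + 1) * (2 * g₁ - 2 + k) + (2 * g - 2) * (g₁ - 1 + k) := by ring
  rw [dSpecial_iff_dvd hg hgen hk, hsplit, dvd_add_left (dvd_mul_right _ _),
    Int.dvd_mul_iff_div_gcd_dvd (by omega)]

end VineCurve

theorem stableVine_and_dvd_iff {g g₁ g₂ k N G : ℤ} (hN : 0 < N) (hNG : N * G = 2 * g - 2) :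
    (StableVine g g₁ g₂ k ∧ N ∣ 2 * g₁ - 2 + k) ↔
      ∃ m : ℤ, 1 ≤ m ∧ m < G ∧ k % 2 = (N * m) % 2 ∧
        1 ≤ k ∧ k ≤ min (N * m + 2) (2 * g - N * m) ∧
        2 * g₁ = N * m - k + 2 ∧ 2 * g₂ = 2 * g - N * m - k := by
  constructor
  · rintro ⟨⟨hg₁, hg₂, hk, hgen, hstab⟩, m, hm⟩
    have hNm : 0 < N * m := by omega
    have hNmG : N * m < N * G := by omega
    exact ⟨m, pos_of_mul_pos_right hNm hN.le, lt_of_mul_lt_mul_left hNmG hN.le, by omega, hk,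
      le_min (by omega) (by omega), by omega, by omega⟩
  · rintro ⟨m, hm, hmG, -, hk, hkm, h₁, h₂⟩
    rw [le_min_iff] at hkm
    have hNm : N ≤ N * m := le_mul_of_one_le_right hN.le hm
    have hNmG : N * m ≤ N * G - N := by nlinarith
    exact ⟨⟨by omega, by omega, hk, by omega, by omega⟩, m, by omega⟩

/-- Proposition 2.9: combinatorial description of `d`-special stable vine curves. -/
theorem stmt_0 (g d : ℤ) (hg : 2 ≤ g) (G N : ℤ)
    (hG : G = Int.gcd (d - g + 1) (2 * g - 2)) (hN : N = (2 * g - 2) / G)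
    (g₁ g₂ k : ℤ) :
    (StableVine g g₁ g₂ k ∧ DSpecial g d g₁ g₂ k) ↔
      ∃ m : ℤ, 1 ≤ m ∧ m < G ∧ k % 2 = (N * m) % 2 ∧
        1 ≤ k ∧ k ≤ min (N * m + 2) (2 * g - N * m) ∧
        2 * g₁ = N * m - k + 2 ∧ 2 * g₂ = 2 * g - N * m - k := by
  have hGdvd : G ∣ 2 * g - 2 := hG ▸ Int.gcd_dvd_right _ _
  have hGpos : 0 < G := hG ▸ Int.natCast_pos.2 (Int.gcd_pos_of_ne_zero_right _ (by omega))
  have hNG : N * G = 2 * g - 2 := hN ▸ Int.ediv_mul_cancel hGdvd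
  have hNpos : 0 < N := hN ▸ Int.ediv_pos_of_pos_of_dvd (by omega) hGpos.le hGdvd
  rw [← stableVine_and_dvd_iff hNpos hNG]
  refine and_congr_right fun ⟨_, _, hk, hgen, _⟩ => ?_
  rw [dSpecial_iff_div_gcd_dvd (by omega) hgen (by omega), ← hG, ← hN]
end

section
/- Let g ≥ 2, and for each positive divisor N of 2g − 2 let Σ(N) denote the set of stable vine curves (g₁, g₂, k) of genus g such that N divides w₁ = 2g₁ − 2 + k. Then for any two positive divisors N, N' of 2g − 2, Σ(N) ⊆ Σ(N') if and only if N' divides N. (Hence the complements of these loci form a lattice of subsets ordered by divisibility.) -/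
-- Both genera of the witness are positive as `0 < w < 2g - 2`, so one or two nodes keep it stable.
theorem exists_stableVine_of_pos_of_lt {g w : ℤ} (hw : 0 < w) (hwg : w < 2 * g - 2) :
    ∃ g₁ g₂ k, StableVine g g₁ g₂ k ∧ 2 * g₁ - 2 + k = w := by
  rcases Int.even_or_odd' w with ⟨m, rfl | rfl⟩
  · exact ⟨m, g - 1 - m, 2, ⟨by omega, by omega, by omega, by omega, by omega⟩, by ring⟩
  · exact ⟨m + 1, g - 1 - m, 1, ⟨by omega, by omega, by omega, by omega, by omega⟩, by ring⟩

theorem stmt_3_general (g : ℤ) (hg : 2 ≤ g) (N N' : ℤ) (hN : 0 < N)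
    (hNd : N ∣ 2 * g - 2) (hN'd : N' ∣ 2 * g - 2) :
    {p : ℤ × ℤ × ℤ | StableVine g p.1 p.2.1 p.2.2 ∧ N ∣ 2 * p.1 - 2 + p.2.2} ⊆
      {p : ℤ × ℤ × ℤ | StableVine g p.1 p.2.1 p.2.2 ∧ N' ∣ 2 * p.1 - 2 + p.2.2} ↔
      N' ∣ N := by
  refine ⟨fun hsub => ?_, fun hN'N p ⟨hvine, hNp⟩ => ⟨hvine, hN'N.trans hNp⟩⟩
  obtain rfl | hNlt := (Int.le_of_dvd (by omega) hNd).eq_or_lt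
  · exact hN'd
  · obtain ⟨g₁, g₂, k, hvine, rfl⟩ := exists_stableVine_of_pos_of_lt hN hNlt
    exact (@hsub (g₁, g₂, k) ⟨hvine, dvd_rfl⟩).2

/-- Proposition 2.14 (vine-curve form): for positive divisors `N, N'` of `2g-2`, the locus
of stable vine curves with `N ∣ w₁` is contained in the one with `N' ∣ w₁` iff `N' ∣ N`. -/
theorem stmt_3 (g : ℤ) (hg : 2 ≤ g) (N N' : ℤ) (hN : 0 < N) (hN' : 0 < N')
    (hNd : N ∣ 2 * g - 2) (hN'd : N' ∣ 2 * g - 2) :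
    {p : ℤ × ℤ × ℤ | StableVine g p.1 p.2.1 p.2.2 ∧ N ∣ 2 * p.1 - 2 + p.2.2} ⊆
      {p : ℤ × ℤ × ℤ | StableVine g p.1 p.2.1 p.2.2 ∧ N' ∣ 2 * p.1 - 2 + p.2.2} ↔
      N' ∣ N :=
  stmt_3_general g hg N N' hN hNd hN'd
end

section
/- Let g ≥ 2 and d be integers and let (g₁, g₂, k) be a stable vine curve of genus g. Then (g₁, g₂, k) admits a balanced multidegree of total degree d which is not stably balanced if and only if (2g − 2) divides (d − g + 1)·w₁, where w₁ = 2g₁ − 2 + k (equivalently, (d−g+1)·w₁/(2g−2) is an integer; equivalently for w₂ in place of w₁). -/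
/-! Write `μᵢ = d·wᵢ/(2g-2)`. Since `w₁ + w₂ = 2g-2` and `e₁ + e₂ = d`, the deviations `eᵢ - μᵢ`
are opposite, so both Basic Inequalities say `|e₁ - μ₁| ≤ k/2`, and a balanced multidegree fails
to be stably balanced exactly when `e₁ = μ₁ ± k/2`. As `k` is an integer, such an integer `e₁`
exists iff `μ₁ + k/2 = (d·w₁ + k(g-1))/(2g-2)` is an integer, and
`d·w₁ + k(g-1) = (d-g+1)·w₁ + (2g-2)(g₁-1+k)`. -/

section BasicInequality

variable {g d k w e : ℤ}

lemma basicIneq_iff_abs_le :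
    BasicIneq g d k w e ↔ |(e : ℚ) - d * w / (2 * g - 2)| ≤ k / 2 := by
  rw [abs_sub_le_iff, BasicIneq]
  constructor <;> rintro ⟨h₁, h₂⟩ <;> constructor <;> linarith

lemma basicIneqStrict_iff_abs_lt :
    BasicIneqStrict g d k w e ↔ |(e : ℚ) - d * w / (2 * g - 2)| < k / 2 := by
  rw [abs_sub_lt_iff, BasicIneqStrict]
  constructor <;> rintro ⟨h₁, h₂⟩ <;> constructor <;> linarith

lemma basicIneq_and_not_basicIneqStrict_iff :
    BasicIneq g d k w e ∧ ¬BasicIneqStrict g d k w e ↔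
      |(e : ℚ) - d * w / (2 * g - 2)| = k / 2 := by
  rw [basicIneq_iff_abs_le, basicIneqStrict_iff_abs_lt, not_lt]
  exact ⟨fun h ↦ le_antisymm h.1 h.2, fun h ↦ ⟨h.le, h.ge⟩⟩

lemma abs_sub_center_eq_of_add_eq {w₁ w₂ e₁ e₂ : ℤ} (hg : g ≠ 1) (hw : w₁ + w₂ = 2 * g - 2)
    (he : e₁ + e₂ = d) :
    |(e₂ : ℚ) - d * w₂ / (2 * g - 2)| = |(e₁ : ℚ) - d * w₁ / (2 * g - 2)| := by
  have hN : (2 * g - 2 : ℚ) ≠ 0 := by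
    rw [sub_ne_zero]; exact_mod_cast (by omega : 2 * g ≠ 2)
  have hw' : (w₂ : ℚ) = 2 * g - 2 - w₁ := by
    have : (w₁ + w₂ : ℚ) = 2 * g - 2 := by exact_mod_cast hw
    linarith
  have he' : (e₂ : ℚ) = d - e₁ := by
    have : (e₁ + e₂ : ℚ) = d := by exact_mod_cast he
    linarith
  rw [← abs_neg, hw', he']
  generalize (2 * g - 2 : ℚ) = N at hN ⊢
  congr 1
  field_simp
  ring

end BasicInequality

section VineCurve

variable {g d g₁ g₂ k : ℤ}

lemma exists_balanced_not_stablyBalanced_iff (hg : g ≠ 1) (hgenus : g = g₁ + g₂ + k - 1) :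
    (∃ e₁ e₂ : ℤ, IsBalanced g d g₁ g₂ k e₁ e₂ ∧ ¬IsStablyBalanced g d g₁ g₂ k e₁ e₂) ↔
      ∃ e₁ : ℤ, |(e₁ : ℚ) - d * (2 * g₁ - 2 + k : ℤ) / (2 * g - 2)| = k / 2 := by
  have hw : (2 * g₁ - 2 + k) + (2 * g₂ - 2 + k) = 2 * g - 2 := by omega
  constructor
  · rintro ⟨e₁, e₂, ⟨he, hb₁, -⟩, hns⟩
    refine ⟨e₁, basicIneq_and_not_basicIneqStrict_iff.1 ⟨hb₁, fun hs₁ ↦ hns ⟨he, hs₁, ?_⟩⟩⟩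
    rw [basicIneqStrict_iff_abs_lt, abs_sub_center_eq_of_add_eq hg hw he]
    rwa [basicIneqStrict_iff_abs_lt] at hs₁
  · rintro ⟨e₁, he₁⟩
    have he : e₁ + (d - e₁) = d := by ring
    have he₂ := abs_sub_center_eq_of_add_eq hg hw he
    refine ⟨e₁, d - e₁, ⟨he, ?_, ?_⟩, fun ⟨_, hs₁, _⟩ ↦ ?_⟩
    · rw [basicIneq_iff_abs_le, he₁]
    · rw [basicIneq_iff_abs_le, he₂, he₁]
    · rw [basicIneqStrict_iff_abs_lt, he₁] at hs₁
      exact lt_irrefl _ hs₁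

end VineCurve

lemma exists_intCast_abs_sub_eq_half_iff {k : ℤ} (hk : 0 ≤ k) (μ : ℚ) :
    (∃ e : ℤ, |(e : ℚ) - μ| = k / 2) ↔ ∃ e : ℤ, (e : ℚ) = μ + k / 2 := by
  have hk' : (0 : ℚ) ≤ k / 2 := by positivity
  constructor
  · rintro ⟨e, he⟩
    rcases (abs_eq hk').1 he with he | he
    · exact ⟨e, by linarith⟩
    · exact ⟨e + k, by push_cast; linarith⟩
  · rintro ⟨e, he⟩
    exact ⟨e, by rw [he, add_sub_cancel_left, abs_of_nonneg hk']⟩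

lemma exists_intCast_eq_div_iff {a n : ℤ} (hn : n ≠ 0) :
    (∃ e : ℤ, (e : ℚ) = a / n) ↔ n ∣ a := by
  have hn' : (n : ℚ) ≠ 0 := by exact_mod_cast hn
  constructor
  · rintro ⟨e, he⟩
    rw [eq_div_iff hn'] at he
    exact ⟨e, by exact_mod_cast he.symm.trans (mul_comm _ _)⟩
  · rintro ⟨c, rfl⟩
    exact ⟨c, by push_cast; field_simp⟩

/-- Remark 1.4(D) (vine-curve form): a stable vine curve admits a balanced multidegree of
total degree `d` which is not stably balanced iff `(2g-2) ∣ (d-g+1)·w₁`. -/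
theorem stmt_6 (g d : ℤ) (hg : 2 ≤ g) (g₁ g₂ k : ℤ) (hvine : StableVine g g₁ g₂ k) :
    (∃ e₁ e₂ : ℤ, IsBalanced g d g₁ g₂ k e₁ e₂ ∧ ¬ IsStablyBalanced g d g₁ g₂ k e₁ e₂) ↔
      2 * g - 2 ∣ (d - g + 1) * (2 * g₁ - 2 + k) := by
  obtain ⟨-, -, hk, hgenus, -⟩ := hvine
  set w₁ := 2 * g₁ - 2 + k
  have hN : 2 * g - 2 ≠ 0 := by omega
  have hcenter : (d : ℚ) * w₁ / (2 * g - 2) + k / 2 =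
      ((d * w₁ + k * (g - 1) : ℤ) : ℚ) / ((2 * g - 2 : ℤ) : ℚ) := by
    have hN' : (2 * g - 2 : ℚ) ≠ 0 := by exact_mod_cast hN
    have hhalf : (k : ℚ) / 2 = k * (g - 1) / (2 * g - 2) := by
      rw [eq_div_iff hN']; ring
    push_cast
    rw [hhalf, ← add_div]
  rw [exists_balanced_not_stablyBalanced_iff (by omega) hgenus,
    exists_intCast_abs_sub_eq_half_iff (by omega), hcenter, exists_intCast_eq_div_iff hN,
    show d * w₁ + k * (g - 1) = (d - g + 1) * w₁ + (2 * g - 2) * (g₁ - 1 + k) by ring,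
    dvd_add_left (dvd_mul_right _ _)]
end

section
/- Let g ≥ 2 and d be integers with G_d := gcd(d − g + 1, 2g − 2) > 1. Then there exist integers g₁ ≥ 1, g₂ ≥ 1 and δ ∈ {1, 2} with δ ≡ (2g−2)/G_d (mod 2), such that g₁ + g₂ + δ − 1 = g and 2g₁ − 2 + δ = (2g − 2)/G_d. In particular there exists a stable vine curve of genus g with w₁ = (2g−2)/G_d. -/
lemma stableVine_of_one_le {g g₁ g₂ k : ℤ} (h₁ : 1 ≤ g₁) (h₂ : 1 ≤ g₂) (hk : 1 ≤ k)
    (hg : g = g₁ + g₂ + k - 1) : StableVine g g₁ g₂ k :=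
  ⟨by omega, by omega, hk, hg, fun h => by omega⟩

lemma one_le_and_le_pred_of_mul_eq {g G N : ℤ} (hg : 2 ≤ g) (hG : 1 < G)
    (hNG : N * G = 2 * g - 2) : 1 ≤ N ∧ N ≤ g - 1 :=
  ⟨by nlinarith, by nlinarith⟩

/-- `N ≤ g - 1` is what leaves genus `g₂ ≥ 1` for the second component. -/
lemma exists_vine_with_w₁ {g N : ℤ} (hN : 1 ≤ N) (hNg : N ≤ g - 1) :
    ∃ g₁ g₂ δ : ℤ, 1 ≤ g₁ ∧ 1 ≤ g₂ ∧ (δ = 1 ∨ δ = 2) ∧ δ % 2 = N % 2 ∧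
      g₁ + g₂ + δ - 1 = g ∧ 2 * g₁ - 2 + δ = N ∧ StableVine g g₁ g₂ δ := by
  rcases Int.even_or_odd' N with ⟨m, rfl | rfl⟩
  · exact ⟨m, g - m - 1, 2, by omega, by omega, Or.inr rfl, by omega, by omega, by omega,
      stableVine_of_one_le (by omega) (by omega) (by norm_num) (by omega)⟩
  · exact ⟨m + 1, g - m - 1, 1, by omega, by omega, Or.inl rfl, by omega, by omega, by omega,
      stableVine_of_one_le (by omega) (by omega) le_rfl (by omega)⟩

/-- The construction in the proof of Proposition 2.12: if `G_d > 1` there is a stable vine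
curve of genus `g` with `w₁ = (2g-2)/G_d`, with `δ ∈ {1, 2}` nodes. -/
theorem stmt_7 (g d : ℤ) (hg : 2 ≤ g) (G N : ℤ)
    (hG : G = Int.gcd (d - g + 1) (2 * g - 2)) (hN : N = (2 * g - 2) / G)
    (hG1 : 1 < G) :
    ∃ g₁ g₂ δ : ℤ, 1 ≤ g₁ ∧ 1 ≤ g₂ ∧ (δ = 1 ∨ δ = 2) ∧ δ % 2 = N % 2 ∧
      g₁ + g₂ + δ - 1 = g ∧ 2 * g₁ - 2 + δ = N ∧ StableVine g g₁ g₂ δ := by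
  have hNG : N * G = 2 * g - 2 := by
    rw [hN]
    exact Int.ediv_mul_cancel (hG ▸ Int.gcd_dvd_right _ _)
  obtain ⟨hN1, hNg⟩ := one_le_and_le_pred_of_mul_eq hg hG1 hNG
  exact exists_vine_with_w₁ hN1 hNg
end

section
/- Let g ≥ 2 and d be integers, set G_d := gcd(d − g + 1, 2g − 2) and N := (2g−2)/G_d. Let m, k be integers with 1 ≤ m < G_d, k ≡ N·m (mod 2) and 1 ≤ k ≤ min(N·m + 2, 2g − N·m). Define g₁ := (N·m − k + 2)/2 and g₂ := (2g − N·m − k)/2. Then g₁ and g₂ are nonnegative integers, g = g₁ + g₂ + k − 1, if g₁ = 0 or g₂ = 0 then k ≥ 3 (so (g₁, g₂, k) is a stable vine curve of genus g), and (g₁, g₂, k) is d-special. -/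
/-!
The multidegree is chosen on the boundary of the Basic Inequality: with `t := (d - g + 1) / G`,
`e₁ := (N m + k) / 2 + t m` equals `d · N m / (2g - 2) + k / 2` exactly, because `G ∣ d - g + 1`
makes `d · N m / (2g - 2) - N m / 2 = t m` an integer. Then `(e₁, d - e₁)` is balanced but not
stably balanced. The bounds `1 ≤ N m ≤ 2g - 3`, coming from `1 ≤ m < G`, give the stability of
the vine curve.
-/

theorem two_mul_sub_two_ne_zero {g : ℤ} (hg : g ≠ 1) : (2 * g - 2 : ℚ) ≠ 0 := by
  have : (g : ℚ) ≠ 1 := by exact_mod_cast hg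
  contrapose! this
  linarith

section BasicIneq

variable {g d k w e : ℤ}

theorem basicIneq_of_eq_add (hk : 0 ≤ k) (he : (e : ℚ) = d * w / (2 * g - 2) + k / 2) :
    BasicIneq g d k w e := by
  have : (0 : ℚ) ≤ k := by exact_mod_cast hk
  constructor <;> linarith

theorem basicIneq_of_eq_sub (hk : 0 ≤ k) (he : (e : ℚ) = d * w / (2 * g - 2) - k / 2) :
    BasicIneq g d k w e := by
  have : (0 : ℚ) ≤ k := by exact_mod_cast hk
  constructor <;> linarith

theorem not_basicIneqStrict_of_eq_add (he : (e : ℚ) = d * w / (2 * g - 2) + k / 2) :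
    ¬ BasicIneqStrict g d k w e :=
  fun h => h.2.ne he

end BasicIneq

theorem dSpecial_of_eq_add {g d g₁ g₂ k e : ℤ} (hg : g ≠ 1) (hk : 0 ≤ k)
    (hgenus : g = g₁ + g₂ + k - 1)
    (he : (e : ℚ) = d * (2 * g₁ - 2 + k : ℤ) / (2 * g - 2) + k / 2) :
    DSpecial g d g₁ g₂ k := by
  have hg' := two_mul_sub_two_ne_zero hg
  have hw₂ : ((2 * g₂ - 2 + k : ℤ) : ℚ) = (2 * g - 2) - (2 * g₁ - 2 + k : ℤ) := by
    rw [hgenus]; push_cast; ring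
  have he₂ : ((d - e : ℤ) : ℚ) = d * (2 * g₂ - 2 + k : ℤ) / (2 * g - 2) - k / 2 := by
    rw [hw₂, mul_sub, sub_div, mul_div_assoc, div_self hg', mul_one, Int.cast_sub, he]
    ring
  exact ⟨e, d - e, ⟨add_sub_cancel e d, basicIneq_of_eq_add hk he, basicIneq_of_eq_sub hk he₂⟩,
    fun h => not_basicIneqStrict_of_eq_add he h.2.1⟩

theorem exists_int_eq_mul_div_add_half {g d G N m k : ℤ} (hg : g ≠ 1)
    (hGN : G * N = 2 * g - 2) (hG : G ∣ d - g + 1) (hpar : 2 ∣ N * m + k) :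
    ∃ e : ℤ, (e : ℚ) = d * (N * m : ℤ) / (2 * g - 2) + k / 2 := by
  obtain ⟨t, ht⟩ := hG
  obtain ⟨s, hs⟩ := hpar
  refine ⟨s + t * m, ?_⟩
  have hg' := two_mul_sub_two_ne_zero hg
  have hGNq : (G * N : ℚ) = 2 * g - 2 := by exact_mod_cast hGN
  have htq : (d - g + 1 : ℚ) = G * t := by exact_mod_cast ht
  have hsq : (N * m + k : ℚ) = 2 * s := by exact_mod_cast hs
  rw [div_add_div _ _ hg' two_ne_zero, eq_div_iff (mul_ne_zero hg' two_ne_zero)]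
  push_cast
  linear_combination -(2 * g - 2) * hsq - 2 * N * m * htq - 2 * t * m * hGNq

theorem stableVine_of_parity {g a k : ℤ} (ha₁ : 0 < a) (ha₂ : a < 2 * g - 2)
    (hpar : k % 2 = a % 2) (hk₁ : 1 ≤ k) (hk₂ : k ≤ min (a + 2) (2 * g - a)) :
    StableVine g ((a - k + 2) / 2) ((2 * g - a - k) / 2) k := by
  unfold StableVine
  omega

theorem mul_pos_and_mul_lt_of_mul_eq {G N m n : ℤ} (hGN : G * N = n) (hn : 0 < n)
    (hm : 1 ≤ m) (hmG : m < G) : 0 < N * m ∧ N * m < n := by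
  have hN : 0 < N := by nlinarith
  constructor <;> nlinarith

/-- Converse direction of Proposition 2.9: the listed numerical data give rise to
`d`-special stable vine curves of genus `g`. -/
theorem stmt_8 (g d : ℤ) (hg : 2 ≤ g) (G N : ℤ)
    (hG : G = Int.gcd (d - g + 1) (2 * g - 2)) (hN : N = (2 * g - 2) / G)
    (m k : ℤ) (hm : 1 ≤ m) (hmG : m < G) (hpar : k % 2 = (N * m) % 2)
    (hk1 : 1 ≤ k) (hk2 : k ≤ min (N * m + 2) (2 * g - N * m)) :
    2 * ((N * m - k + 2) / 2) = N * m - k + 2 ∧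
    2 * ((2 * g - N * m - k) / 2) = 2 * g - N * m - k ∧
    0 ≤ (N * m - k + 2) / 2 ∧ 0 ≤ (2 * g - N * m - k) / 2 ∧
    g = (N * m - k + 2) / 2 + (2 * g - N * m - k) / 2 + k - 1 ∧
    (((N * m - k + 2) / 2 = 0 ∨ (2 * g - N * m - k) / 2 = 0) → 3 ≤ k) ∧
    StableVine g ((N * m - k + 2) / 2) ((2 * g - N * m - k) / 2) k ∧
    DSpecial g d ((N * m - k + 2) / 2) ((2 * g - N * m - k) / 2) k := by
  have hg1 : g ≠ 1 := by omega
  have hGN : G * N = 2 * g - 2 := hN ▸ Int.mul_ediv_cancel' (hG ▸ Int.gcd_dvd_right _ _)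
  obtain ⟨hNm₁, hNm₂⟩ := mul_pos_and_mul_lt_of_mul_eq hGN (by omega) hm hmG
  have hvine := stableVine_of_parity hNm₁ hNm₂ hpar hk1 hk2
  obtain ⟨hg₁, hg₂, -, hgenus, hstab⟩ := id hvine
  refine ⟨by omega, by omega, hg₁, hg₂, hgenus, hstab, hvine, ?_⟩
  obtain ⟨e, he⟩ := exists_int_eq_mul_div_add_half hg1 hGN
    (hG ▸ Int.gcd_dvd_left _ _) (by omega : 2 ∣ N * m + k)
  have hw : 2 * ((N * m - k + 2) / 2) - 2 + k = N * m := by omega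
  exact dSpecial_of_eq_add hg1 (by omega) hgenus (hw ▸ he)
end

section
/- Let g ≥ 3 be an odd integer. Then gcd(2 − g, 2g − 2) = 1, and no stable vine curve of genus g is 1-special (i.e., no stable vine curve of genus g admits a balanced multidegree of total degree 1 which is not stably balanced). -/
/-! If `(e₁, e₂)` is balanced but not stably balanced for `d = 1`, some component meets its
Basic Inequality with equality, `(g - 1)(2eᵢ ± k) = wᵢ`. Stability gives `0 < wᵢ < 2g - 2`,
which forces `2eᵢ ± k = 1` and `wᵢ = g - 1`. Then `k` is odd, hence so is `wᵢ = 2gᵢ - 2 + k`,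
so `g` is even. -/

theorem gcd_two_sub_two_mul_sub_two_of_odd {g : ℤ} (hodd : Odd g) :
    Int.gcd (2 - g) (2 * g - 2) = 1 := by
  obtain ⟨m, rfl⟩ := hodd
  rw [← Int.isCoprime_iff_gcd_eq_one]
  exact ⟨1 - 2 * m, 1 - m, by ring⟩

theorem BasicIneq.mul_eq_of_not_strict {g d k w e : ℤ} (hg : g ≠ 1)
    (hb : BasicIneq g d k w e) (hns : ¬ BasicIneqStrict g d k w e) :
    (g - 1) * (2 * e + k) = d * w ∨ (g - 1) * (2 * e - k) = d * w := by
  obtain ⟨hlo, hhi⟩ := hb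
  rw [BasicIneqStrict, not_and_or, not_lt, not_lt] at hns
  have hg' : (g : ℚ) - 1 ≠ 0 := sub_ne_zero.mpr (by exact_mod_cast hg)
  have hD : (2 * g - 2 : ℚ) = 2 * (g - 1) := by ring
  rw [hD] at hlo hhi hns
  rcases hns with h | h
  · left
    have heq := le_antisymm h hlo
    field_simp at heq
    exact_mod_cast (by linarith : ((g : ℚ) - 1) * (2 * e + k) = d * w)
  · right
    have heq := le_antisymm hhi h
    field_simp at heq
    exact_mod_cast (by linarith : ((g : ℚ) - 1) * (2 * e - k) = d * w)

theorem eq_one_of_mul_eq_of_pos_of_lt {a t w : ℤ} (h : a * t = w) (hw : 0 < w)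
    (hwa : w < 2 * a) : t = 1 := by
  have ha : 0 < a := by omega
  have ht : 0 < t := pos_of_mul_pos_right (h ▸ hw) ha.le
  have ht' : t < 2 := lt_of_mul_lt_mul_left (by rwa [mul_comm 2, ← h] at hwa) ha.le
  omega

theorem BasicIneq.eq_sub_one_and_odd_of_not_strict {g k w e : ℤ} (hw : 0 < w) (hwg : w < 2 * g - 2)
    (hb : BasicIneq g 1 k w e) (hns : ¬ BasicIneqStrict g 1 k w e) :
    w = g - 1 ∧ Odd k := by
  have hwg' : w < 2 * (g - 1) := by omega
  rcases hb.mul_eq_of_not_strict (by omega) hns with h | h <;>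
  · rw [one_mul] at h
    have ht := eq_one_of_mul_eq_of_pos_of_lt h hw hwg'
    exact ⟨by rw [← h, ht, mul_one], Int.odd_iff.mpr (by omega)⟩

theorem BasicIneq.strict_one_of_odd {g a k e : ℤ} (hodd : Odd g) (hw : 0 < 2 * a - 2 + k)
    (hwg : 2 * a - 2 + k < 2 * g - 2) (hb : BasicIneq g 1 k (2 * a - 2 + k) e) :
    BasicIneqStrict g 1 k (2 * a - 2 + k) e := by
  by_contra hns
  obtain ⟨hw', hk⟩ := hb.eq_sub_one_and_odd_of_not_strict hw hwg hns
  rw [Int.odd_iff] at hodd hk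
  omega

namespace StableVine

variable {g g₁ g₂ k : ℤ}

theorem pos_left (h : StableVine g g₁ g₂ k) : 0 < 2 * g₁ - 2 + k := by
  obtain ⟨hg₁, -, hk, -, hst⟩ := h
  rcases hg₁.eq_or_lt with h₀ | h₀
  · have := hst (Or.inl h₀.symm); omega
  · omega

theorem symm (h : StableVine g g₁ g₂ k) : StableVine g g₂ g₁ k := by
  obtain ⟨hg₁, hg₂, hk, hgen, hst⟩ := h
  exact ⟨hg₂, hg₁, hk, by omega, fun h' => hst h'.symm⟩

theorem lt_left (h : StableVine g g₁ g₂ k) : 2 * g₁ - 2 + k < 2 * g - 2 := by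
  have := h.symm.pos_left
  obtain ⟨-, -, -, hgen, -⟩ := h
  omega

end StableVine

theorem stmt_15_general (g : ℤ) (hodd : Odd g) :
    Int.gcd (2 - g) (2 * g - 2) = 1 ∧
      ∀ g₁ g₂ k : ℤ, StableVine g g₁ g₂ k → ¬ DSpecial g 1 g₁ g₂ k := by
  refine ⟨gcd_two_sub_two_mul_sub_two_of_odd hodd, ?_⟩
  rintro g₁ g₂ k hv ⟨e₁, e₂, ⟨hsum, hb₁, hb₂⟩, hns⟩
  exact hns ⟨hsum, hb₁.strict_one_of_odd hodd hv.pos_left hv.lt_left,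
    hb₂.strict_one_of_odd hodd hv.symm.pos_left hv.symm.lt_left⟩

/-- Example 2.4 (vine-curve form), odd genus: `gcd(2 - g, 2g - 2) = 1` and no stable vine
curve of genus `g` is `1`-special. -/
theorem stmt_15 (g : ℤ) (hg : 3 ≤ g) (hodd : Odd g) :
    Int.gcd (2 - g) (2 * g - 2) = 1 ∧
      ∀ g₁ g₂ k : ℤ, StableVine g g₁ g₂ k → ¬ DSpecial g 1 g₁ g₂ k :=
  stmt_15_general g hodd
end
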